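/- Consistency lemma for the eikonal equation, second version (Lemma 3.5). Let v : ℝ^N → ℝ be Lipschitz, let φ : (0,T]×ℝ^N → ℝ be bounded and C¹, and let (t₀,x₀) ∈ (0,T)×ℝ^N. There exists a function o : (0,1)×(0,1) → [0,∞) with o(ε,r) → 0 as (ε,r) → (0,0) such that for all sufficiently small ε, r > 0 and all (t,x) in the ball B_r(t₀,x₀) there exist positive numbers m and M (possibly depending on ε, t, x) with m·(∂_tφ(t₀,x₀) + v(x₀)|D_xφ(t₀,x₀)| − o(ε,r)) ≤ S^ε[φ](t,x) − φ(t,x) ≤ M·(∂_tφ(t₀,x₀) + v(x₀)|D_xφ(t₀,x₀)| + o(ε,r)). -/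

import Mathlib

open MeasureTheory Metric Set Filter Topology RealInnerProductSpace

noncomputable section

attribute [local instance] Classical.propDecidable

/-- ℝ^N. -/
abbrev Euc (N : ℕ) := EuclideanSpace ℝ (Fin N)

/-- The cut-off function `C_ε(r) = (r ∨ ε^{3/2}) ∧ ε^{1/2}`. -/
def cutC (ε r : ℝ) : ℝ := min (max r (ε ^ ((3:ℝ)/2))) (ε ^ ((1:ℝ)/2))

/-- Paul's admissible positions `E^+(x)`. -/
def Eplus {N : ℕ} (v : Euc N → ℝ) (ε : ℝ) (x : Euc N) : Set (Euc N) :=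
  if (ball x ε ∩ {y | 0 < v y}).Nonempty then ball x ε ∩ {y | 0 < v y} else {x}

/-- Carol's admissible positions `E^-(x)`. -/
def Eminus {N : ℕ} (v : Euc N → ℝ) (ε : ℝ) (x : Euc N) : Set (Euc N) :=
  if (ball x ε ∩ {y | v y < 0}).Nonempty then ball x ε ∩ {y | v y < 0} else {x}

/-- Paul's time increment `T_P(x,x')`. -/
def TPe {N : ℕ} (v : Euc N → ℝ) (ε : ℝ) (x x' : Euc N) : ℝ :=
  if (ball x ε ∩ {y | 0 < v y}).Nonempty then cutC ε (ε / max (v x') 0) else ε ^ 2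

/-- Carol's time increment `T_C(x,x')`. -/
def TCe {N : ℕ} (v : Euc N → ℝ) (ε : ℝ) (x x' : Euc N) : ℝ :=
  if (ball x ε ∩ {y | v y < 0}).Nonempty then cutC ε (ε / max (-v x') 0) else ε ^ 2

/-- The operator `R^ε[φ](t,x) = sup_{x_P ∈ E^+(x)} φ(t + T_P(x,x_P), x_P)`. -/
def Rup {N : ℕ} (v : Euc N → ℝ) (ε : ℝ) (φ : ℝ → Euc N → ℝ) (t : ℝ) (x : Euc N) : ℝ :=
  sSup ((fun xP => φ (t + TPe v ε x xP) xP) '' Eplus v ε x)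

/-- The operator `R_ε[φ](t,x) = inf_{x_C ∈ E^-(x)} φ(t + T_C(x,x_C), x_C)`. -/
def Rlo {N : ℕ} (v : Euc N → ℝ) (ε : ℝ) (φ : ℝ → Euc N → ℝ) (t : ℝ) (x : Euc N) : ℝ :=
  sInf ((fun xC => φ (t + TCe v ε x xC) xC) '' Eminus v ε x)

/-- The one-step game operator `S^ε[φ](t,x)` for the eikonal game. -/
def Seik {N : ℕ} (v : Euc N → ℝ) (ε : ℝ) (φ : ℝ → Euc N → ℝ) (t : ℝ) (x : Euc N) : ℝ :=
  sSup ((fun xP =>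
      sInf ((fun xC => φ (t + TPe v ε x xP + TCe v ε xP xC) xC) '' Eminus v ε xP)) ''
    Eplus v ε x)

/-- Viscosity subsolution of `−∂_t u − v(x)|Du| = 0` on `(0,T)×ℝ^N`. -/
def EikSubsol {N : ℕ} (v : Euc N → ℝ) (T : ℝ) (u : ℝ → Euc N → ℝ) : Prop :=
  UpperSemicontinuousOn (fun p : ℝ × Euc N => u p.1 p.2) (Ioo (0:ℝ) T ×ˢ univ) ∧
  ∀ φ : ℝ → Euc N → ℝ, ContDiff ℝ 2 (fun p : ℝ × Euc N => φ p.1 p.2) →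
    ∀ t ∈ Ioo (0:ℝ) T, ∀ x : Euc N,
      (∃ δ > (0:ℝ), ∀ s ∈ Ioo (0:ℝ) T, ∀ y : Euc N, |s - t| < δ → dist y x < δ →
        u s y - φ s y ≤ u t x - φ t x) →
      -(deriv (fun s => φ s x) t) - v x * ‖gradient (φ t) x‖ ≤ 0

/-- Viscosity supersolution of `−∂_t u − v(x)|Du| = 0` on `(0,T)×ℝ^N`. -/
def EikSupersol {N : ℕ} (v : Euc N → ℝ) (T : ℝ) (u : ℝ → Euc N → ℝ) : Prop :=
  LowerSemicontinuousOn (fun p : ℝ × Euc N => u p.1 p.2) (Ioo (0:ℝ) T ×ˢ univ) ∧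
  ∀ φ : ℝ → Euc N → ℝ, ContDiff ℝ 2 (fun p : ℝ × Euc N => φ p.1 p.2) →
    ∀ t ∈ Ioo (0:ℝ) T, ∀ x : Euc N,
      (∃ δ > (0:ℝ), ∀ s ∈ Ioo (0:ℝ) T, ∀ y : Euc N, |s - t| < δ → dist y x < δ →
        u t x - φ t x ≤ u s y - φ s y) →
      0 ≤ -(deriv (fun s => φ s x) t) - v x * ‖gradient (φ t) x‖

/-- Upper relaxed semi-limit `limsup* u^ε`. -/
def relaxSup {N : ℕ} (u : ℝ → ℝ → Euc N → ℝ) (t : ℝ) (x : Euc N) : ℝ :=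
  sInf {a | ∃ δ > (0:ℝ), a = sSup ((fun q : ℝ × ℝ × Euc N => u q.1 q.2.1 q.2.2) ''
    {q | 0 < q.1 ∧ q.1 < δ ∧ |q.2.1 - t| < δ ∧ dist q.2.2 x < δ})}

/-- Lower relaxed semi-limit `liminf* u^ε`. -/
def relaxInf {N : ℕ} (u : ℝ → ℝ → Euc N → ℝ) (t : ℝ) (x : Euc N) : ℝ :=
  sSup {a | ∃ δ > (0:ℝ), a = sInf ((fun q : ℝ × ℝ × Euc N => u q.1 q.2.1 q.2.2) ''
    {q | 0 < q.1 ∧ q.1 < δ ∧ |q.2.1 - t| < δ ∧ dist q.2.2 x < δ})}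

/-!
Write `a = ∂ₜφ(t₀, x₀)`, `g = Dₓφ(t₀, x₀)` and `A = a + v(x₀) |g|`. Because of the free positive
factors `m`, `M`, it suffices to show that `S^ε[φ](t, x) - φ(t, x)` has the sign of `A` whenever
`A ≠ 0`. Since `φ` is `C¹`, `φ(t + τ, y) - φ(t, x) = τ a + ⟪g, y - x⟫ + o(τ + |y - x|)` uniformly
near `(t₀, x₀)`, and `v` stays within `O(r + ε)` of `v(x₀)` on the positions reachable in one round.

* If `v(x₀) > 0`, Carol cannot move and only waits `ε²`; Paul's steps take time `ε / v`, so the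
  best step, of length `≈ ε` along `g`, gains `≈ ε A / v(x₀)`, and no step gains more.
* If `v(x₀) < 0`, the same argument applies to Carol after replacing `v, φ` by `-v, -φ`.
* If `v(x₀) = 0`, then `|v|` is small near `x₀`, so a move of length `< ε` costs a time step of at
  least `min (ε / |v|, √ε) ≫ ε`, while staying put costs `ε²`; either way the time term `τ a`
  dominates and every move has the sign of `a = A`.
-/

namespace EikonalConsistency

variable {N : ℕ}

local notation "𝓕" => 𝓝[>] (0:ℝ) ×ˢ 𝓝[>] (0:ℝ)

section CutOff

variable {ε s : ℝ}

lemma rpow_one_half_eq_sqrt : ε ^ ((1:ℝ) / 2) = √ε := (Real.sqrt_eq_rpow ε).symm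

lemma rpow_three_halves_eq (hε : 0 < ε) : ε ^ ((3:ℝ) / 2) = ε * √ε := by
  rw [show (3:ℝ) / 2 = 1 + 1 / 2 by norm_num, Real.rpow_add hε, Real.rpow_one,
    rpow_one_half_eq_sqrt]

lemma cutC_le_sqrt : cutC ε s ≤ √ε := by
  rw [cutC, rpow_one_half_eq_sqrt]; exact min_le_right _ _

lemma min_le_cutC : min s √ε ≤ cutC ε s := by
  rw [cutC, rpow_one_half_eq_sqrt]; exact min_le_min_right _ (le_max_left _ _)

lemma cutC_pos (hε : 0 < ε) : 0 < cutC ε s :=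
  lt_min ((Real.rpow_pos_of_pos hε _).trans_le (le_max_right _ _)) (Real.rpow_pos_of_pos hε _)

lemma cutC_eq_self (hε : 0 < ε) (h₁ : ε * √ε ≤ s) (h₂ : s ≤ √ε) : cutC ε s = s := by
  rw [cutC, rpow_three_halves_eq hε, rpow_one_half_eq_sqrt, max_eq_left h₁, min_eq_left h₂]

lemma sq_le_sqrt_of_le_one (hε : 0 ≤ ε) (hε₁ : ε ≤ 1) : ε ^ 2 ≤ √ε := by
  have : ε ≤ √ε := Real.le_sqrt_of_sq_le (by nlinarith)
  nlinarith

end CutOff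

section Moves

variable {v : Euc N → ℝ} {ε : ℝ} {x y : Euc N}

lemma Eplus_nonempty : (Eplus v ε x).Nonempty := by
  unfold Eplus; split_ifs with h
  exacts [h, singleton_nonempty x]

lemma Eplus_subset_ball (hε : 0 < ε) : Eplus v ε x ⊆ ball x ε := by
  unfold Eplus; split_ifs
  exacts [inter_subset_left, singleton_subset_iff.2 (mem_ball_self hε)]

lemma Eplus_eq_ball (hε : 0 < ε) (hv : ∀ y ∈ ball x ε, 0 < v y) : Eplus v ε x = ball x ε := by
  have hsub : ball x ε ⊆ {y | 0 < v y} := hv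
  rw [Eplus, if_pos ⟨x, mem_ball_self hε, hv x (mem_ball_self hε)⟩, inter_eq_left.2 hsub]

lemma Eplus_eq_singleton (hv : ∀ y ∈ ball x ε, v y ≤ 0) : Eplus v ε x = {x} := by
  rw [Eplus, if_neg]
  rintro ⟨y, hy, hpos⟩
  exact (hv y hy).not_gt hpos

lemma TPe_eq_sq (hv : ∀ y ∈ ball x ε, v y ≤ 0) : TPe v ε x y = ε ^ 2 := by
  rw [TPe, if_neg]
  rintro ⟨y, hy, hpos⟩
  exact (hv y hy).not_gt hpos

lemma TPe_eq_div (hε : 0 < ε) (hx : 0 < v x) (h₁ : √ε ≤ v y) (h₂ : v y * √ε ≤ 1) :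
    TPe v ε x y = ε / v y := by
  have hy : 0 < v y := (Real.sqrt_pos.2 hε).trans_le h₁
  rw [TPe, if_pos ⟨x, mem_ball_self hε, hx⟩, max_eq_left hy.le]
  apply cutC_eq_self hε
  · rw [le_div_iff₀ hy]; nlinarith
  · rw [div_le_iff₀ hy]; nlinarith [Real.mul_self_sqrt hε.le, Real.sqrt_nonneg ε]

lemma TPe_pos (hε : 0 < ε) : 0 < TPe v ε x y := by
  unfold TPe; split_ifs
  exacts [cutC_pos hε, by positivity]

lemma TPe_le_sqrt (hε : 0 < ε) (hε₁ : ε ≤ 1) : TPe v ε x y ≤ √ε := by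
  unfold TPe; split_ifs
  exacts [cutC_le_sqrt, sq_le_sqrt_of_le_one hε.le hε₁]

lemma Eminus_eq_Eplus_neg : Eminus v ε x = Eplus (-v) ε x := by
  simp only [Eminus, Eplus, Pi.neg_apply, neg_pos]

lemma TCe_eq_TPe_neg : TCe v ε x y = TPe (-v) ε x y := by
  simp only [TCe, TPe, Pi.neg_apply, neg_pos]

end Moves

section Operators

variable {v : Euc N → ℝ} {ε : ℝ} {φ : ℝ → Euc N → ℝ} {t K c : ℝ} {x : Euc N}

lemma Eminus_nonempty : (Eminus v ε x).Nonempty :=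
  Eminus_eq_Eplus_neg ▸ Eplus_nonempty

lemma le_Seik
    (hK : ∀ xP ∈ Eplus v ε x, ∀ xC ∈ Eminus v ε xP,
      |φ (t + TPe v ε x xP + TCe v ε xP xC) xC| ≤ K)
    {xP : Euc N} (hxP : xP ∈ Eplus v ε x)
    (hc : ∀ xC ∈ Eminus v ε xP, c ≤ φ (t + TPe v ε x xP + TCe v ε xP xC) xC) :
    c ≤ Seik v ε φ t x := by
  refine le_csSup_of_le ⟨K, forall_mem_image.2 fun y hy => ?_⟩ (mem_image_of_mem _ hxP)
    (le_csInf (Eminus_nonempty.image _) (forall_mem_image.2 hc))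
  obtain ⟨xC, hxC⟩ := Eminus_nonempty (v := v) (ε := ε) (x := y)
  exact csInf_le_of_le ⟨-K, forall_mem_image.2 fun z hz => neg_le_of_abs_le (hK y hy z hz)⟩
    (mem_image_of_mem _ hxC) (le_of_abs_le (hK y hy xC hxC))

lemma Seik_le
    (hK : ∀ xP ∈ Eplus v ε x, ∀ xC ∈ Eminus v ε xP,
      |φ (t + TPe v ε x xP + TCe v ε xP xC) xC| ≤ K)
    (hc : ∀ xP ∈ Eplus v ε x, ∃ xC ∈ Eminus v ε xP,
      φ (t + TPe v ε x xP + TCe v ε xP xC) xC ≤ c) :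
    Seik v ε φ t x ≤ c := by
  refine csSup_le (Eplus_nonempty.image _) (forall_mem_image.2 fun xP hxP => ?_)
  obtain ⟨xC, hxC, hle⟩ := hc xP hxP
  exact csInf_le_of_le ⟨-K, forall_mem_image.2 fun z hz => neg_le_of_abs_le (hK xP hxP z hz)⟩
    (mem_image_of_mem _ hxC) hle

/-- Where `v ≥ 0` Carol cannot move, so the game reduces to Paul's move followed by a pause. -/
lemma Seik_eq_Rup (hε : 0 < ε) (hv : ∀ y ∈ ball x (2 * ε), 0 ≤ v y) :
    Seik v ε φ t x = Rup v ε φ (t + ε ^ 2) x := by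
  have hC : ∀ y ∈ Eplus v ε x, ∀ z ∈ ball y ε, (-v) z ≤ 0 := fun y hy z hz => by
    have hy' := mem_ball.1 (Eplus_subset_ball hε hy)
    have hz' : z ∈ ball x (2 * ε) := mem_ball.2 (by linarith [dist_triangle z y x, mem_ball.1 hz])
    simpa using hv z hz'
  refine congrArg sSup (image_congr fun y hy => ?_)
  rw [Eminus_eq_Eplus_neg, Eplus_eq_singleton (hC y hy), image_singleton, csInf_singleton,
    TCe_eq_TPe_neg, TPe_eq_sq (hC y hy), add_right_comm]

lemma Seik_eq_Rlo (hv : ∀ y ∈ ball x ε, v y ≤ 0) : Seik v ε φ t x = Rlo v ε φ (t + ε ^ 2) x := by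
  rw [Seik, Eplus_eq_singleton hv, image_singleton, csSup_singleton, TPe_eq_sq hv, Rlo]

lemma Rlo_eq_neg_Rup : Rlo v ε φ t x = -Rup (-v) ε (-φ) t x := by
  rw [Rlo, Rup, Real.sInf_def, Eminus_eq_Eplus_neg, ← image_neg_eq_neg, image_image]
  simp only [TCe_eq_TPe_neg, Pi.neg_apply]

end Operators

section LinearApprox

def LinearApproxOn (φ : ℝ → Euc N → ℝ) (a : ℝ) (g : Euc N) (δ t : ℝ) (x : Euc N) (τ₁ R : ℝ) :
    Prop :=
  ∀ τ ∈ Icc 0 τ₁, ∀ y ∈ closedBall x R,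
    |φ (t + τ) y - φ t x - (τ * a + ⟪g, y - x⟫)| ≤ δ * (τ + ‖y - x‖)

variable {φ : ℝ → Euc N → ℝ} {a δ t τ τ₁ R : ℝ} {g x y : Euc N}

lemma LinearApproxOn.neg (h : LinearApproxOn φ a g δ t x τ₁ R) :
    LinearApproxOn (-φ) (-a) (-g) δ t x τ₁ R := by
  intro τ hτ y hy
  rw [← abs_neg]
  convert h τ hτ y hy using 2
  simp only [Pi.neg_apply, inner_neg_left]
  ring

lemma LinearApproxOn.abs_le_add (h : LinearApproxOn φ a g δ t x τ₁ R) (hδ : 0 ≤ δ)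
    (hτ : τ ∈ Icc 0 τ₁) (hy : y ∈ closedBall x R) :
    |φ (t + τ) y| ≤ |φ t x| + (τ₁ + R) * (|a| + ‖g‖ + δ) := by
  have happrox := abs_le.1 (h τ hτ y hy)
  have hinner := abs_le.1 (abs_real_inner_le_norm g (y - x))
  have hτa := abs_le.1 (show |τ * a| ≤ τ₁ * |a| by
    rw [abs_mul, abs_of_nonneg hτ.1]; exact mul_le_mul_of_nonneg_right hτ.2 (abs_nonneg a))
  have hyx : ‖y - x‖ ≤ R := by rw [← dist_eq_norm]; exact hy
  have hgy : ‖g‖ * ‖y - x‖ ≤ ‖g‖ * R := mul_le_mul_of_nonneg_left hyx (norm_nonneg g)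
  have hδτ : δ * (τ + ‖y - x‖) ≤ δ * (τ₁ + R) := mul_le_mul_of_nonneg_left (by linarith [hτ.2]) hδ
  have hR : 0 ≤ R := (norm_nonneg _).trans hyx
  have hRa := mul_nonneg hR (abs_nonneg a)
  have hτg := mul_nonneg (hτ.1.trans hτ.2) (norm_nonneg g)
  rw [abs_le]
  constructor <;> linarith [neg_abs_le (φ t x), le_abs_self (φ t x)]

lemma hasFDerivAt_uncurry_apply {D : ℝ × Euc N →L[ℝ] ℝ} {t₀ : ℝ} {x₀ : Euc N}
    (hD : HasFDerivAt (fun p : ℝ × Euc N => φ p.1 p.2) D (t₀, x₀)) (τ : ℝ) (h : Euc N) :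
    D (τ, h) = τ * deriv (fun s => φ s x₀) t₀ + ⟪gradient (φ t₀) x₀, h⟫ := by
  have htime : HasDerivAt (fun s => φ s x₀) (D (1, 0)) t₀ := by
    have hcomp := hD.comp_hasDerivAt t₀ ((hasDerivAt_id t₀).prodMk (hasDerivAt_const t₀ x₀))
    exact hcomp
  have hspace : HasFDerivAt (φ t₀) (D.comp (ContinuousLinearMap.inr ℝ ℝ (Euc N))) x₀ :=
    hD.comp x₀ (hasFDerivAt_prodMk_right t₀ x₀)
  have hsplit : ((τ, h) : ℝ × Euc N) = τ • ((1 : ℝ), (0 : Euc N)) + ((0 : ℝ), h) := by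
    simp
  rw [hsplit, map_add, map_smul, htime.deriv, gradient, hspace.fderiv,
    InnerProductSpace.toDual_symm_apply, smul_eq_mul]
  rfl

end LinearApprox

lemma exists_dist_le_inner_eq {E : Type*} [NormedAddCommGroup E] [InnerProductSpace ℝ E]
    (g x : E) {s : ℝ} (hs : 0 ≤ s) : ∃ y, dist y x ≤ s ∧ ⟪g, y - x⟫ = s * ‖g‖ := by
  rcases eq_or_ne g 0 with rfl | hg
  · exact ⟨x, by simpa using hs, by simp⟩
  · have hng : 0 < ‖g‖ := norm_pos_iff.2 hg
    refine ⟨x + (s / ‖g‖) • g, ?_, ?_⟩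
    · rw [dist_eq_norm, add_sub_cancel_left, norm_smul, Real.norm_eq_abs,
        abs_of_nonneg (div_nonneg hs hng.le), div_mul_cancel₀ _ hng.ne']
    · rw [add_sub_cancel_left, real_inner_smul_right, real_inner_self_eq_norm_sq]
      field_simp

section OneSidedRegime

variable {v : Euc N → ℝ} {φ : ℝ → Euc N → ℝ} {ε s t a δ V w : ℝ} {g x : Euc N}

lemma sq_add_div_mem_Icc {u : ℝ} (hε : 0 < ε) (hε₁ : ε ≤ 1) (hu : √ε ≤ u) :
    ε ^ 2 + ε / u ∈ Icc 0 (2 * √ε) := by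
  have hs := Real.sqrt_pos.2 hε
  have hdiv : ε / u ≤ √ε := by
    rw [div_le_iff₀ (hs.trans_le hu)]
    nlinarith [Real.mul_self_sqrt hε.le]
  exact ⟨add_nonneg (sq_nonneg ε) (div_nonneg hε.le (hs.le.trans hu)),
    by linarith [sq_le_sqrt_of_le_one hε.le hε₁]⟩

lemma Rup_eq_sSup_ball (hε : 0 < ε) (hv : ∀ y ∈ ball x ε, |v y - V| ≤ w)
    (h₁ : √ε + w ≤ V) (h₂ : (V + w) * √ε ≤ 1) :
    Rup v ε φ s x = sSup ((fun y => φ (s + ε / v y) y) '' ball x ε) := by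
  have hs := Real.sqrt_pos.2 hε
  have hreg : ∀ y ∈ ball x ε, √ε ≤ v y ∧ v y * √ε ≤ 1 := fun y hy => by
    have := abs_le.1 (hv y hy)
    constructor <;> nlinarith
  have hpos : ∀ y ∈ ball x ε, 0 < v y := fun y hy => hs.trans_le (hreg y hy).1
  rw [Rup, Eplus_eq_ball hε hpos]
  refine congrArg sSup (image_congr fun y hy => ?_)
  rw [TPe_eq_div hε (hpos x (mem_ball_self hε)) (hreg y hy).1 (hreg y hy).2]

lemma Rup_lt (hε : 0 < ε) (hε₁ : ε ≤ 1) (hδ : 0 ≤ δ)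
    (hφ : LinearApproxOn φ a g δ t x (2 * √ε) (2 * ε)) (hv : ∀ y ∈ ball x ε, |v y - V| ≤ w)
    (h₁ : √ε + w ≤ V) (h₂ : (V + w) * √ε ≤ 1) (hA : a + δ + (V + w) * (‖g‖ + δ) < 0) :
    Rup v ε φ (t + ε ^ 2) x < φ t x := by
  have hw : 0 ≤ w := (abs_nonneg _).trans (hv x (mem_ball_self hε))
  have hVw : 0 < V + w := by linarith [Real.sqrt_pos.2 hε]
  have had : a + δ < 0 := by nlinarith [norm_nonneg g]
  set c := ε / (V + w) * (a + δ + (V + w) * (‖g‖ + δ))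
  have hc : c < 0 := mul_neg_of_pos_of_neg (by positivity) hA
  rw [Rup_eq_sSup_ball hε hv h₁ h₂]
  refine (csSup_le ((nonempty_ball.2 hε).image _) (forall_mem_image.2 fun y hy => ?_)).trans_lt
    (by linarith : φ t x + c < φ t x)
  have hvy := abs_le.1 (hv y hy)
  have hvpos : 0 < v y := by linarith [Real.sqrt_pos.2 hε]
  have hτ := sq_add_div_mem_Icc hε hε₁ (by linarith : √ε ≤ v y)
  have hyx : ‖y - x‖ ≤ ε := by rw [← dist_eq_norm]; exact (mem_ball.1 hy).le
  have happrox := (abs_le.1 (hφ _ hτ y (ball_subset_closedBall.trans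
    (closedBall_subset_closedBall (by linarith)) hy))).2
  rw [← add_assoc] at happrox
  have hinner := real_inner_le_norm g (y - x)
  have htime : (ε ^ 2 + ε / v y) * (a + δ) ≤ ε / (V + w) * (a + δ) := by
    refine mul_le_mul_of_nonpos_right ?_ had.le
    have := div_le_div_of_nonneg_left hε.le hvpos (by linarith : v y ≤ V + w)
    nlinarith
  have hc_eq : c = ε / (V + w) * (a + δ) + ε * (‖g‖ + δ) := by
    simp only [c]; field_simp
  nlinarith [norm_nonneg g]

lemma lt_Rup (hε : 0 < ε) (hε₁ : ε < 1) (hδ : 0 ≤ δ)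
    (hφ : LinearApproxOn φ a g δ t x (2 * √ε) (2 * ε)) (hv : ∀ y ∈ ball x ε, |v y - V| ≤ w)
    (h₁ : √ε + w ≤ V) (h₂ : (V + w) * √ε ≤ 1)
    (hA : w * |ε * (a - δ) + (1 - ε) * (‖g‖ - δ)|
      < a - δ + V * (ε * (a - δ) + (1 - ε) * (‖g‖ - δ))) :
    φ t x < Rup v ε φ (t + ε ^ 2) x := by
  set k := ε * (a - δ) + (1 - ε) * (‖g‖ - δ)
  have hs := Real.sqrt_pos.2 hε
  have hsub : ball x ε ⊆ closedBall x (2 * ε) :=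
    ball_subset_closedBall.trans (closedBall_subset_closedBall (by linarith))
  have hτ : ∀ y ∈ ball x ε, ε ^ 2 + ε / v y ∈ Icc 0 (2 * √ε) := fun y hy =>
    sq_add_div_mem_Icc hε hε₁.le (by linarith [(abs_le.1 (hv y hy)).1])
  have hbdd : BddAbove ((fun y => φ (t + ε ^ 2 + ε / v y) y) '' ball x ε) :=
    ⟨_, forall_mem_image.2 fun y hy => add_assoc t _ _ ▸
      le_of_abs_le (hφ.abs_le_add hδ (hτ y hy) (hsub hy))⟩
  -- Paul steps a distance `ε (1 - ε)` along `g`; multiplied by `v y / ε`, his gain becomes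
  -- `a - δ + v y * k`, and `v y` is within `w` of `V`.
  obtain ⟨y, hyx, hgy⟩ := exists_dist_le_inner_eq g x (s := ε * (1 - ε)) (by nlinarith)
  have hy : y ∈ ball x ε := mem_ball.2 (by nlinarith)
  rw [Rup_eq_sSup_ball hε hv h₁ h₂]
  refine lt_of_lt_of_le ?_ (le_csSup hbdd (mem_image_of_mem _ hy))
  have hvy := abs_le.1 (hv y hy)
  have hvpos : 0 < v y := by linarith
  have happrox := (abs_le.1 (hφ _ (hτ y hy) y (hsub hy))).1
  rw [← add_assoc] at happrox
  have hyx' : ‖y - x‖ ≤ ε * (1 - ε) := by rwa [← dist_eq_norm]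
  have hgain : 0 < a - δ + v y * k := by
    have := abs_le.1 (show |(v y - V) * k| ≤ w * |k| by
      rw [abs_mul]; exact mul_le_mul_of_nonneg_right (abs_le.2 hvy) (abs_nonneg k))
    nlinarith
  have hid : (ε ^ 2 + ε / v y) * (a - δ) + ε * (1 - ε) * (‖g‖ - δ)
      = ε / v y * (a - δ + v y * k) := by
    simp only [k]; field_simp; ring
  have : 0 < ε / v y * (a - δ + v y * k) := mul_pos (by positivity) hgain
  nlinarith

end OneSidedRegime

section Game

variable {v : Euc N → ℝ} {φ : ℝ → Euc N → ℝ} {ε t a b c δ w : ℝ} {g x xP xC : Euc N}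

lemma mem_ball_two_mul (hε : 0 < ε) (hxP : xP ∈ Eplus v ε x) {z : Euc N} (hz : z ∈ ball xP ε) :
    z ∈ ball x (2 * ε) :=
  mem_ball.2 (by
    linarith [dist_triangle z xP x, mem_ball.1 hz, mem_ball.1 (Eplus_subset_ball hε hxP)])

lemma step_mem (hε : 0 < ε) (hε₁ : ε ≤ 1) (hxP : xP ∈ Eplus v ε x)
    (hxC : xC ∈ Eminus v ε xP) :
    TPe v ε x xP + TCe v ε xP xC ∈ Icc 0 (2 * √ε) ∧ xC ∈ closedBall x (2 * ε) := by
  rw [Eminus_eq_Eplus_neg] at hxC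
  rw [TCe_eq_TPe_neg]
  refine ⟨⟨?_, ?_⟩, ball_subset_closedBall (mem_ball_two_mul hε hxP (Eplus_subset_ball hε hxC))⟩
  · linarith [TPe_pos (v := v) (x := x) (y := xP) hε, TPe_pos (v := -v) (x := xP) (y := xC) hε]
  · linarith [TPe_le_sqrt (v := v) (x := x) (y := xP) hε hε₁,
      TPe_le_sqrt (v := -v) (x := xP) (y := xC) hε hε₁]

lemma abs_step_le (hε : 0 < ε) (hε₁ : ε ≤ 1) (hδ : 0 ≤ δ)
    (hφ : LinearApproxOn φ a g δ t x (2 * √ε) (2 * ε)) :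
    ∀ xP ∈ Eplus v ε x, ∀ xC ∈ Eminus v ε xP, |φ (t + TPe v ε x xP + TCe v ε xP xC) xC|
      ≤ |φ t x| + (2 * √ε + 2 * ε) * (|a| + ‖g‖ + δ) := fun _ hxP _ hxC => by
  obtain ⟨hτ, hy⟩ := step_mem hε hε₁ hxP hxC
  rw [add_assoc]
  exact hφ.abs_le_add hδ hτ hy

lemma step_bounds (hε : 0 < ε) (hε₁ : ε ≤ 1) (hδ : 0 ≤ δ)
    (hφ : LinearApproxOn φ a g δ t x (2 * √ε) (2 * ε))
    (hxP : xP ∈ Eplus v ε x) (hxC : xC ∈ Eminus v ε xP) :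
    TPe v ε x xP * (a - δ) - (‖g‖ + δ) * ‖xP - x‖
        + (TCe v ε xP xC * (a - δ) - (‖g‖ + δ) * ‖xC - xP‖)
      ≤ φ (t + TPe v ε x xP + TCe v ε xP xC) xC - φ t x ∧
    φ (t + TPe v ε x xP + TCe v ε xP xC) xC - φ t x
      ≤ TPe v ε x xP * (a + δ) + (‖g‖ + δ) * ‖xP - x‖
        + (TCe v ε xP xC * (a + δ) + (‖g‖ + δ) * ‖xC - xP‖) := by
  obtain ⟨hτ, hy⟩ := step_mem hε hε₁ hxP hxC
  have happrox := abs_le.1 (hφ _ hτ xC hy)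
  rw [← add_assoc] at happrox
  have hsplit : xC - x = (xP - x) + (xC - xP) := by abel
  have hinner := abs_le.1 (abs_real_inner_le_norm g (xC - x))
  have htri : ‖xC - x‖ ≤ ‖xP - x‖ + ‖xC - xP‖ := hsplit ▸ norm_add_le _ _
  have hg := mul_le_mul_of_nonneg_left htri (norm_nonneg g)
  have hδ' := mul_le_mul_of_nonneg_left htri hδ
  constructor <;> nlinarith

/-- A single move gains at least `ε min(εb, c)`: either the mover stays put and only time
advances by `ε²`, or `v ≤ w` makes the time step at least `min(ε / w, √ε)`. -/
lemma mul_min_le_TPe_mul_sub (hε : 0 < ε) (hb : 0 < b) (hc : 0 ≤ c)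
    (hv : ∀ z ∈ ball x ε, v z ≤ w) (hw : 2 * w * c ≤ b) (hs : 2 * √ε * c ≤ b) {y : Euc N}
    (hy : y ∈ Eplus v ε x) :
    ε * min (ε * b) c ≤ TPe v ε x y * b - c * ‖y - x‖ := by
  by_cases hne : (ball x ε ∩ {z | 0 < v z}).Nonempty
  · rw [Eplus, if_pos hne] at hy
    have hvy : 0 < v y := hy.2
    have hyx : ‖y - x‖ ≤ ε := by rw [← dist_eq_norm]; exact (mem_ball.1 hy.1).le
    have hmin : 2 * ε * c ≤ min (ε / v y) √ε * b := by
      rcases min_cases (ε / v y) √ε with ⟨h, -⟩ | ⟨h, -⟩ <;> rw [h]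
      · have h2 : 2 * v y * c ≤ b := by nlinarith [mul_le_mul_of_nonneg_right (hv y hy.1) hc]
        rw [div_mul_eq_mul_div, le_div_iff₀ hvy]
        nlinarith [mul_le_mul_of_nonneg_left h2 hε.le]
      · nlinarith [Real.mul_self_sqrt hε.le, mul_le_mul_of_nonneg_left hs (Real.sqrt_nonneg ε)]
    have hT : min (ε / v y) √ε ≤ TPe v ε x y := by
      rw [TPe, if_pos hne, max_eq_left hvy.le]
      exact min_le_cutC
    nlinarith [min_le_right (ε * b) c, mul_le_mul_of_nonneg_left hyx hc,
      mul_le_mul_of_nonneg_right hT hb.le]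
  · rw [Eplus, if_neg hne, mem_singleton_iff] at hy
    rw [hy, TPe, if_neg hne, sub_self, norm_zero, mul_zero, sub_zero]
    nlinarith [min_le_left (ε * b) c]

lemma lt_Seik (hε : 0 < ε) (hε₁ : ε ≤ 1) (hδ : 0 < δ)
    (hφ : LinearApproxOn φ a g δ t x (2 * √ε) (2 * ε)) (hv : ∀ y ∈ ball x (2 * ε), |v y| ≤ w)
    (hb : 0 < a - δ) (hw : 2 * w * (‖g‖ + δ) ≤ a - δ) (hs : 2 * √ε * (‖g‖ + δ) ≤ a - δ) :
    φ t x < Seik v ε φ t x := by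
  have hc : 0 < ‖g‖ + δ := by positivity
  have hm : 0 < ε * min (ε * (a - δ)) (‖g‖ + δ) := by positivity
  obtain ⟨xP, hxP⟩ := (Eplus_nonempty : (Eplus v ε x).Nonempty)
  refine (lt_add_of_pos_right _ hm).trans_le
    (le_Seik (abs_step_le hε hε₁ hδ.le hφ) hxP fun xC hxC => ?_)
  have hP := mul_min_le_TPe_mul_sub hε hb hc.le
    (fun z hz => le_of_abs_le (hv z (ball_subset_ball (by linarith) hz))) hw hs hxP
  have hC := mul_min_le_TPe_mul_sub (v := -v) hε hb hc.le
    (fun z hz => (neg_le_abs _).trans (hv z (mem_ball_two_mul hε hxP hz))) hw hs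
    (Eminus_eq_Eplus_neg ▸ hxC)
  rw [← TCe_eq_TPe_neg] at hC
  linarith [(step_bounds hε hε₁ hδ.le hφ hxP hxC).1]

lemma Seik_lt (hε : 0 < ε) (hε₁ : ε ≤ 1) (hδ : 0 < δ)
    (hφ : LinearApproxOn φ a g δ t x (2 * √ε) (2 * ε)) (hv : ∀ y ∈ ball x (2 * ε), |v y| ≤ w)
    (hb : 0 < -(a + δ)) (hw : 2 * w * (‖g‖ + δ) ≤ -(a + δ))
    (hs : 2 * √ε * (‖g‖ + δ) ≤ -(a + δ)) :
    Seik v ε φ t x < φ t x := by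
  have hc : 0 < ‖g‖ + δ := by positivity
  have hm : 0 < ε * min (ε * -(a + δ)) (‖g‖ + δ) := by positivity
  refine (Seik_le (abs_step_le hε hε₁ hδ.le hφ) fun xP hxP => ?_).trans_lt (sub_lt_self _ hm)
  obtain ⟨xC, hxC⟩ := (Eminus_nonempty : (Eminus v ε xP).Nonempty)
  refine ⟨xC, hxC, ?_⟩
  have hP := mul_min_le_TPe_mul_sub hε hb hc.le
    (fun z hz => le_of_abs_le (hv z (ball_subset_ball (by linarith) hz))) hw hs hxP
  have hC := mul_min_le_TPe_mul_sub (v := -v) hε hb hc.le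
    (fun z hz => (neg_le_abs _).trans (hv z (mem_ball_two_mul hε hxP hz))) hw hs
    (Eminus_eq_Eplus_neg ▸ hxC)
  rw [← TCe_eq_TPe_neg] at hC
  linarith [(step_bounds hε hε₁ hδ.le hφ hxP hxC).2]

end Game

def SignAgrees (A d : ℝ) : Prop := (0 < A → 0 < d) ∧ (A < 0 → d < 0)

section SignAgrees

variable {A d e : ℝ}

lemma signAgrees_zero_left (d : ℝ) : SignAgrees 0 d :=
  ⟨fun h => (lt_irrefl 0 h).elim, fun h => (lt_irrefl 0 h).elim⟩

lemma SignAgrees.neg (h : SignAgrees A d) : SignAgrees (-A) (-d) :=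
  ⟨fun hA => neg_pos.2 (h.2 (neg_pos.1 hA)), fun hA => neg_lt_zero.2 (h.1 (neg_lt_zero.1 hA))⟩

lemma SignAgrees.exists_mul_le (h : SignAgrees A d) (he : 0 < e) :
    ∃ m M : ℝ, 0 < m ∧ 0 < M ∧ m * (A - e) ≤ d ∧ d ≤ M * (A + e) := by
  rcases lt_trichotomy A 0 with hA | rfl | hA
  · have hd := h.2 hA
    refine ⟨d / (A - e), d / (A - e), div_pos_of_neg_of_neg hd (by linarith),
      div_pos_of_neg_of_neg hd (by linarith), ?_, ?_⟩
    · rw [div_mul_cancel₀ _ (by linarith)]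
    · have := mul_le_mul_of_nonneg_left (by linarith : A - e ≤ A + e)
        (div_pos_of_neg_of_neg hd (by linarith : A - e < 0)).le
      rwa [div_mul_cancel₀ _ (by linarith)] at this
  · refine ⟨(|d| + 1) / e, (|d| + 1) / e, by positivity, by positivity, ?_, ?_⟩
    · rw [zero_sub, mul_neg, div_mul_cancel₀ _ he.ne']
      linarith [neg_abs_le d]
    · rw [zero_add, div_mul_cancel₀ _ he.ne']
      linarith [le_abs_self d]
  · have hd := h.1 hA
    refine ⟨d / (A + e), d / (A + e), by positivity, by positivity, ?_, ?_⟩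
    · have := mul_le_mul_of_nonneg_left (by linarith : A - e ≤ A + e)
        (div_pos hd (by linarith : 0 < A + e)).le
      rwa [div_mul_cancel₀ _ (by linarith)] at this
    · rw [div_mul_cancel₀ _ (by linarith)]

end SignAgrees

section Asymptotics

lemma nhdsGT_prod_le_nhds_zero : 𝓕 ≤ 𝓝 (0 : ℝ × ℝ) := by
  rw [← Prod.mk_zero_zero, nhds_prod_eq]
  exact prod_mono nhdsWithin_le_nhds nhdsWithin_le_nhds

lemma eventually_lt_of_continuous {f g : ℝ × ℝ → ℝ} (hf : Continuous f) (hg : Continuous g)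
    (h : f 0 < g 0) : ∀ᶠ p in 𝓕, f p < g p :=
  (hf.continuousAt.eventually_lt hg.continuousAt h).filter_mono nhdsGT_prod_le_nhds_zero

lemma eventually_pos : ∀ᶠ p in 𝓕, 0 < p.1 ∧ 0 < p.2 :=
  prod_mem_prod self_mem_nhdsWithin self_mem_nhdsWithin

lemma exists_Ioo_of_eventually {P : ℝ × ℝ → Prop} (h : ∀ᶠ p in 𝓕, P p) :
    ∃ ε₀ > (0:ℝ), ∃ r₀ > (0:ℝ), ∀ ε ∈ Ioo (0:ℝ) ε₀, ∀ r ∈ Ioo (0:ℝ) r₀, P (ε, r) := by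
  obtain ⟨pa, hpa, pb, hpb, hP⟩ := eventually_prod_iff.1 h
  obtain ⟨ε₀, hε₀, hpa⟩ := mem_nhdsGT_iff_exists_Ioo_subset.1 hpa
  obtain ⟨r₀, hr₀, hpb⟩ := mem_nhdsGT_iff_exists_Ioo_subset.1 hpb
  exact ⟨ε₀, hε₀, r₀, hr₀, fun ε hε r hr => hP (hpa hε) (hpb hr)⟩

end Asymptotics

section Localization

variable {v : Euc N → ℝ} {φ : ℝ → Euc N → ℝ} {a : ℝ} {g : Euc N} {L : NNReal} {t₀ : ℝ}
  {x₀ : Euc N}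

lemma eventually_linearApproxOn {D : ℝ × Euc N →L[ℝ] ℝ}
    (hD : HasStrictFDerivAt (fun p : ℝ × Euc N => φ p.1 p.2) D (t₀, x₀)) {δ : ℝ} (hδ : 0 < δ) :
    ∀ᶠ p in 𝓕, ∀ t x, dist (t, x) (t₀, x₀) < p.2 →
      LinearApproxOn φ (deriv (fun s => φ s x₀) t₀) (gradient (φ t₀) x₀) δ t x
        (2 * √p.1) (2 * p.1) := by
  obtain ⟨ρ, hρ, hball⟩ := Metric.eventually_nhds_iff.1 (hD.isLittleO.def hδ)
  filter_upwards [eventually_lt_of_continuous (f := fun p => p.2 + 2 * √p.1 + 2 * p.1)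
    (g := fun _ => ρ) (by fun_prop) continuous_const (by simpa using hρ)]
    with p hp t x hd τ hτ y hy
  have hnear : dist ((t + τ, y), (t, x)) ((t₀, x₀), (t₀, x₀)) < ρ := by
    have hyx : dist y x ≤ 2 * p.1 := hy
    simp only [Prod.dist_eq, Real.dist_eq, max_lt_iff] at hd ⊢
    refine ⟨⟨?_, ?_⟩, ?_, ?_⟩
    · rw [abs_lt] at hd ⊢
      constructor <;> linarith [hτ.1, hτ.2, hd.1.1, hd.1.2, (dist_nonneg : 0 ≤ dist y x)]
    · linarith [dist_triangle y x x₀, Real.sqrt_nonneg p.1]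
    · linarith [hd.1, Real.sqrt_nonneg p.1, (dist_nonneg : 0 ≤ dist y x)]
    · linarith [hd.2, Real.sqrt_nonneg p.1, (dist_nonneg : 0 ≤ dist y x)]
  have happrox := hball hnear
  simp only [Prod.mk_sub_mk, add_sub_cancel_left, Real.norm_eq_abs] at happrox
  rw [hasFDerivAt_uncurry_apply hD.hasFDerivAt] at happrox
  refine happrox.trans (mul_le_mul_of_nonneg_left ?_ hδ.le)
  rw [Prod.norm_mk, Real.norm_eq_abs, abs_of_nonneg hτ.1]
  exact max_le (le_add_of_nonneg_right (norm_nonneg _)) (le_add_of_nonneg_left hτ.1)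

end Localization

section Cases

variable {v : Euc N → ℝ} {φ : ℝ → Euc N → ℝ} {a : ℝ} {g : Euc N} {L : NNReal} {t₀ : ℝ}
  {x₀ : Euc N}

lemma abs_sub_le_of_dist_lt (hL : LipschitzWith L v) {r ε t : ℝ} {x y : Euc N}
    (hd : dist (t, x) (t₀, x₀) < r) (hy : y ∈ ball x (2 * ε)) :
    |v y - v x₀| ≤ L * (r + 2 * ε) := by
  have hx : dist x x₀ < r := (le_max_right _ _).trans_lt hd
  rw [← Real.dist_eq]
  exact (hL.dist_le_mul y x₀).trans (mul_le_mul_of_nonneg_left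
    (by linarith [dist_triangle y x x₀, mem_ball.1 hy]) L.coe_nonneg)

lemma eventually_pos_near (hL : LipschitzWith L v) (hV : 0 < v x₀) :
    ∀ᶠ p in 𝓕, ∀ t x, dist (t, x) (t₀, x₀) < p.2 → ∀ y ∈ ball x (2 * p.1), 0 < v y := by
  filter_upwards [eventually_lt_of_continuous (f := fun p => L * (p.2 + 2 * p.1))
    (g := fun _ => v x₀) (by fun_prop) continuous_const (by simpa using hV)]
    with p hp t x hd y hy
  linarith [(abs_le.1 (abs_sub_le_of_dist_lt hL hd hy)).1]

lemma eventually_signAgrees_Rup (hL : LipschitzWith L v) (hV : 0 < v x₀)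
    (hφ : ∀ δ > 0, ∀ᶠ p in 𝓕, ∀ t x, dist (t, x) (t₀, x₀) < p.2 →
      LinearApproxOn φ a g δ t x (2 * √p.1) (2 * p.1)) :
    ∀ᶠ p in 𝓕, ∀ t x, dist (t, x) (t₀, x₀) < p.2 →
      SignAgrees (a + v x₀ * ‖g‖) (Rup v p.1 φ (t + p.1 ^ 2) x - φ t x) := by
  set V := v x₀
  have hreg : ∀ᶠ p in 𝓕, 0 < p.1 ∧ p.1 < 1 ∧ √p.1 + L * (p.2 + 2 * p.1) < V ∧
      (V + L * (p.2 + 2 * p.1)) * √p.1 < 1 := by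
    filter_upwards [eventually_pos,
      eventually_lt_of_continuous (f := Prod.fst) (g := fun _ => 1) continuous_fst
        continuous_const (by simp),
      eventually_lt_of_continuous (f := fun p => √p.1 + L * (p.2 + 2 * p.1)) (g := fun _ => V)
        (by fun_prop) continuous_const (by simpa using hV),
      eventually_lt_of_continuous (f := fun p => (V + L * (p.2 + 2 * p.1)) * √p.1)
        (g := fun _ => 1) (by fun_prop) continuous_const (by simp)]
      with p hp h₀ h₁ h₂
    exact ⟨hp.1, h₀, h₁, h₂⟩
  have hv : ∀ p : ℝ × ℝ, 0 < p.1 → ∀ t x, dist (t, x) (t₀, x₀) < p.2 →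
      ∀ y ∈ ball x p.1, |v y - V| ≤ L * (p.2 + 2 * p.1) := fun p hε t x hd y hy =>
    abs_sub_le_of_dist_lt hL hd (ball_subset_ball (by linarith) hy)
  rcases lt_trichotomy (a + V * ‖g‖) 0 with hA | hA | hA
  · set δ := -(a + V * ‖g‖) / (2 * (1 + V))
    have hδ : 0 < δ := div_pos (neg_pos.2 hA) (by positivity)
    have hlim : a + δ + V * (‖g‖ + δ) < 0 := by
      have : δ * (2 * (1 + V)) = -(a + V * ‖g‖) := div_mul_cancel₀ _ (by positivity)
      nlinarith
    filter_upwards [hreg, hφ δ hδ,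
      eventually_lt_of_continuous (f := fun p => a + δ + (V + L * (p.2 + 2 * p.1)) * (‖g‖ + δ))
        (g := fun _ => 0) (by fun_prop) continuous_const (by simpa using hlim)]
      with p ⟨hε, hε₁, h₁, h₂⟩ happrox hcond t x hd
    exact ⟨fun h => (hA.not_gt h).elim, fun _ => sub_neg.2
      (Rup_lt hε hε₁.le hδ.le (happrox t x hd) (hv p hε t x hd) h₁.le h₂.le hcond)⟩
  · exact Eventually.of_forall fun p t x _ => by rw [hA]; exact signAgrees_zero_left _
  · set δ := (a + V * ‖g‖) / (2 * (1 + V))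
    have hδ : 0 < δ := div_pos hA (by positivity)
    have hlim : 0 < a - δ + V * (‖g‖ - δ) := by
      have : δ * (2 * (1 + V)) = a + V * ‖g‖ := div_mul_cancel₀ _ (by positivity)
      nlinarith
    filter_upwards [hreg, hφ δ hδ,
      eventually_lt_of_continuous
        (f := fun p => L * (p.2 + 2 * p.1) * |p.1 * (a - δ) + (1 - p.1) * (‖g‖ - δ)|)
        (g := fun p => a - δ + V * (p.1 * (a - δ) + (1 - p.1) * (‖g‖ - δ)))
        (by fun_prop) (by fun_prop) (by simpa using hlim)]
      with p ⟨hε, hε₁, h₁, h₂⟩ happrox hcond t x hd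
    exact ⟨fun _ => sub_pos.2
      (lt_Rup hε hε₁ hδ.le (happrox t x hd) (hv p hε t x hd) h₁.le h₂.le hcond),
      fun h => (hA.not_gt h).elim⟩

lemma eventually_signAgrees_of_eq_zero (hL : LipschitzWith L v) (hV : v x₀ = 0)
    (hφ : ∀ δ > 0, ∀ᶠ p in 𝓕, ∀ t x, dist (t, x) (t₀, x₀) < p.2 →
      LinearApproxOn φ a g δ t x (2 * √p.1) (2 * p.1)) :
    ∀ᶠ p in 𝓕, ∀ t x, dist (t, x) (t₀, x₀) < p.2 →
      SignAgrees (a + v x₀ * ‖g‖) (Seik v p.1 φ t x - φ t x) := by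
  have hv : ∀ p : ℝ × ℝ, ∀ t x, dist (t, x) (t₀, x₀) < p.2 →
      ∀ y ∈ ball x (2 * p.1), |v y| ≤ L * (p.2 + 2 * p.1) := fun p t x hd y hy => by
    simpa [hV] using abs_sub_le_of_dist_lt hL hd hy
  have hsmall : ∀ {b c : ℝ}, 0 < b → ∀ᶠ p in 𝓕, 0 < p.1 ∧ p.1 < 1 ∧
      2 * (L * (p.2 + 2 * p.1)) * c < b ∧ 2 * √p.1 * c < b := fun {b c} hb => by
    filter_upwards [eventually_pos,
      eventually_lt_of_continuous (f := Prod.fst) (g := fun _ => 1) continuous_fst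
        continuous_const (by simp),
      eventually_lt_of_continuous (f := fun p => 2 * (L * (p.2 + 2 * p.1)) * c) (g := fun _ => b)
        (by fun_prop) continuous_const (by simpa using hb),
      eventually_lt_of_continuous (f := fun p => 2 * √p.1 * c) (g := fun _ => b)
        (by fun_prop) continuous_const (by simpa using hb)]
      with p hp h₀ h₁ h₂
    exact ⟨hp.1, h₀, h₁, h₂⟩
  rw [hV, zero_mul, add_zero]
  rcases lt_trichotomy a 0 with ha | rfl | ha
  · have hδ : 0 < -a / 2 := by linarith
    have hb : 0 < -(a + -a / 2) := by linarith
    filter_upwards [hsmall (c := ‖g‖ + -a / 2) hb, hφ _ hδ]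
      with p ⟨hε, hε₁, hw, hs⟩ happrox t x hd
    exact ⟨fun h => (ha.not_gt h).elim, fun _ => sub_neg.2
      (Seik_lt hε hε₁.le hδ (happrox t x hd) (hv p t x hd) hb hw.le hs.le)⟩
  · exact Eventually.of_forall fun p t x _ => signAgrees_zero_left _
  · have hδ : 0 < a / 2 := by linarith
    have hb : 0 < a - a / 2 := by linarith
    filter_upwards [hsmall (c := ‖g‖ + a / 2) hb, hφ _ hδ]
      with p ⟨hε, hε₁, hw, hs⟩ happrox t x hd
    exact ⟨fun _ => sub_pos.2
      (lt_Seik hε hε₁.le hδ (happrox t x hd) (hv p t x hd) hb hw.le hs.le),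
      fun h => (ha.not_gt h).elim⟩

lemma eventually_signAgrees_Seik (hL : LipschitzWith L v)
    (hφ : ∀ δ > 0, ∀ᶠ p in 𝓕, ∀ t x, dist (t, x) (t₀, x₀) < p.2 →
      LinearApproxOn φ a g δ t x (2 * √p.1) (2 * p.1)) :
    ∀ᶠ p in 𝓕, ∀ t x, dist (t, x) (t₀, x₀) < p.2 →
      SignAgrees (a + v x₀ * ‖g‖) (Seik v p.1 φ t x - φ t x) := by
  rcases lt_trichotomy (v x₀) 0 with hV | hV | hV
  · have hL' : LipschitzWith L (-v) := LipschitzWith.of_dist_le_mul fun y z => by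
      simpa [dist_neg_neg] using hL.dist_le_mul y z
    have hV' : 0 < (-v) x₀ := neg_pos.2 hV
    filter_upwards [eventually_pos, eventually_pos_near hL' hV',
      eventually_signAgrees_Rup (φ := -φ) (a := -a) (g := -g) hL' hV'
        fun δ hδ => (hφ δ hδ).mono fun p hp t x hd => (hp t x hd).neg]
      with p hp hneg hS t x hd
    rw [Seik_eq_Rlo fun y hy =>
      (neg_pos.1 (hneg t x hd y (ball_subset_ball (by linarith) hy))).le, Rlo_eq_neg_Rup]
    convert (hS t x hd).neg using 1 <;> simp only [Pi.neg_apply, norm_neg] <;> ring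
  · exact eventually_signAgrees_of_eq_zero hL hV hφ
  · filter_upwards [eventually_pos, eventually_pos_near hL hV, eventually_signAgrees_Rup hL hV hφ]
      with p hp hpos hS t x hd
    rw [Seik_eq_Rup hp.1 fun y hy => (hpos t x hd y hy).le]
    exact hS t x hd

end Cases

end EikonalConsistency

open EikonalConsistency

theorem consistency_eikonal_second_general
    {N : ℕ} (T : ℝ)
    (v : Euc N → ℝ) (hv : ∃ L, LipschitzWith L v)
    (φ : ℝ → Euc N → ℝ)
    (hφ : ContDiffOn ℝ 1 (fun p : ℝ × Euc N => φ p.1 p.2) (Ioc (0:ℝ) T ×ˢ univ))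
    (t₀ : ℝ) (x₀ : Euc N) (ht₀ : t₀ ∈ Ioo (0:ℝ) T) :
    ∃ o : ℝ → ℝ → ℝ, (∀ ε r, 0 ≤ o ε r) ∧
      Tendsto (fun p : ℝ × ℝ => o p.1 p.2) (𝓝[Ioi 0 ×ˢ Ioi 0] ((0:ℝ), (0:ℝ))) (𝓝 0) ∧
      ∃ ε₀ > (0:ℝ), ∃ r₀ > (0:ℝ), ∀ ε ∈ Ioo (0:ℝ) ε₀, ∀ r ∈ Ioo (0:ℝ) r₀,
        ∀ (t : ℝ) (x : Euc N), dist (t, x) (t₀, x₀) < r →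
          ∃ m M : ℝ, 0 < m ∧ 0 < M ∧
            m * (deriv (fun s => φ s x₀) t₀ + v x₀ * ‖gradient (φ t₀) x₀‖ - o ε r)
              ≤ Seik v ε φ t x - φ t x ∧
            Seik v ε φ t x - φ t x
              ≤ M * (deriv (fun s => φ s x₀) t₀ + v x₀ * ‖gradient (φ t₀) x₀‖ + o ε r) := by
  obtain ⟨L, hL⟩ := hv
  have hD := (hφ.contDiffAt (prod_mem_nhds (Ioc_mem_nhds ht₀.1 ht₀.2)
    (univ_mem : univ ∈ 𝓝 x₀))).hasStrictFDerivAt one_ne_zero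
  obtain ⟨ε₀, hε₀, r₀, hr₀, hsign⟩ := exists_Ioo_of_eventually
    (eventually_signAgrees_Seik hL fun δ hδ => eventually_linearApproxOn hD hδ)
  refine ⟨fun ε r => |ε| + |r|, fun ε r => by positivity, ?_, ε₀, hε₀, r₀, hr₀,
    fun ε hε r hr t x hd => (hsign ε hε r hr t x hd).exists_mul_le
      (add_pos_of_pos_of_nonneg (abs_pos.2 hε.1.ne') (abs_nonneg r))⟩
  have hcont : Continuous fun p : ℝ × ℝ => |p.1| + |p.2| := by fun_prop
  simpa using (hcont.tendsto (0, 0)).mono_left nhdsWithin_le_nhds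

/-- Lemma 3.5: consistency lemma for the eikonal equation, second version. -/
theorem consistency_eikonal_second
    {N : ℕ} (hN : 1 ≤ N) (T : ℝ) (hT : 0 < T)
    (v : Euc N → ℝ) (hv : ∃ L, LipschitzWith L v)
    (φ : ℝ → Euc N → ℝ)
    (hφ : ContDiffOn ℝ 1 (fun p : ℝ × Euc N => φ p.1 p.2) (Ioc (0:ℝ) T ×ˢ univ))
    (hφb : ∃ M, ∀ t ∈ Ioc (0:ℝ) T, ∀ x, |φ t x| ≤ M)
    (t₀ : ℝ) (x₀ : Euc N) (ht₀ : t₀ ∈ Ioo (0:ℝ) T) :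
    ∃ o : ℝ → ℝ → ℝ, (∀ ε r, 0 ≤ o ε r) ∧
      Tendsto (fun p : ℝ × ℝ => o p.1 p.2) (𝓝[Ioi 0 ×ˢ Ioi 0] ((0:ℝ), (0:ℝ))) (𝓝 0) ∧
      ∃ ε₀ > (0:ℝ), ∃ r₀ > (0:ℝ), ∀ ε ∈ Ioo (0:ℝ) ε₀, ∀ r ∈ Ioo (0:ℝ) r₀,
        ∀ (t : ℝ) (x : Euc N), dist (t, x) (t₀, x₀) < r →
          ∃ m M : ℝ, 0 < m ∧ 0 < M ∧
            m * (deriv (fun s => φ s x₀) t₀ + v x₀ * ‖gradient (φ t₀) x₀‖ - o ε r)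
              ≤ Seik v ε φ t x - φ t x ∧
            Seik v ε φ t x - φ t x
              ≤ M * (deriv (fun s => φ s x₀) t₀ + v x₀ * ‖gradient (φ t₀) x₀‖ + o ε r) :=
  consistency_eikonal_second_general T v hv φ hφ t₀ x₀ ht₀
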